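/- (Completeness of Δ-edge anchored clique enumeration) Let R_i be a rule stratum, t ≥ 0, and r ∈ R_i a rule whose arity is at least 2 and all of whose body literals have arity at most 2. For every ground rule r̄ ∈ gr({r}, J_i^t) with B(r̄) ∩ Δ_i^t ≠ ∅, the corresponding k-clique C(r̄) is a clique of G(r, J_i^t) containing at least one edge of ΔE_{i,r}^t; consequently, an enumeration procedure that, for each edge e ∈ ΔE_{i,r}^t, enumerates all k-cliques of G(r, J_i^t) containing e, generates the clique C(r̄). -/

import Mathlib

namespace Planning

/-- A term is either a variable or an object (constant). -/
inductive Term (V O : Type) : Type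
  | var : V → Term V O
  | obj : O → Term V O
  deriving DecidableEq

/-- An atom is a predicate symbol applied to a list of terms. -/
structure Atom (P V O : Type) : Type where
  pred : P
  args : List (Term V O)

variable {P V O : Type}

def Term.isObj : Term V O → Prop
  | .var _ => False
  | .obj _ => True

/-- A ground atom mentions no variables. -/
def Atom.isGround (a : Atom P V O) : Prop := ∀ t ∈ a.args, t.isObj

/-- The (finite) set of variables occurring in an atom; its card is the arity of the literal. -/
def Atom.vars [DecidableEq V] (a : Atom P V O) : Finset V :=
  (a.args.filterMap fun t => match t with
    | Term.var v => some v
    | Term.obj _ => none).toFinset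

/-- Two terms match iff one of them is a variable, or they are equal objects. -/
def Term.Matches : Term V O → Term V O → Prop
  | .var _, _ => True
  | _, .var _ => True
  | .obj o, .obj o' => o = o'

/-- `P(x_1,...,x_n)` matches `P'(x'_1,...,x'_n)` iff `P = P'` and each pair of
corresponding terms matches. -/
def Atom.Matches (a b : Atom P V O) : Prop :=
  a.pred = b.pred ∧ List.Forall₂ Term.Matches a.args b.args

/-- Apply a partial substitution to a term. -/
def Term.subst (σ : V → Option O) : Term V O → Term V O
  | .var v => match σ v with
    | some o => .obj o
    | none => .var v
  | .obj o => .obj o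

/-- Apply a partial substitution to an atom. -/
def Atom.subst (σ : V → Option O) (a : Atom P V O) : Atom P V O :=
  ⟨a.pred, a.args.map (Term.subst σ)⟩

/-- Apply a total substitution `ρ`, yielding the ground atom `a[ρ]`. -/
def Atom.ground (ρ : V → O) (a : Atom P V O) : Atom P V O :=
  a.subst (fun v => some (ρ v))

/-- The partial substitution `[v, v']` induced by two vertices `v = x/o`, `v' = x'/o'`. -/
def pairSub [DecidableEq V] (v v' : V × O) : V → Option O :=
  fun x => if x = v.1 then some v.2 else if x = v'.1 then some v'.2 else none

/-- The partial substitution `[v]` induced by a single vertex `v = x/o`. -/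
def singleSub [DecidableEq V] (v : V × O) : V → Option O :=
  fun x => if x = v.1 then some v.2 else none

/-- An action schema (also used for the body of a Datalog rule): a finite set of
variables `X(a)`, positive precondition atoms and negative precondition atoms. -/
structure Schema (P V O : Type) : Type where
  vars : Finset V
  prePos : Set (Atom P V O)
  preNeg : Set (Atom P V O)

/-- The arity of a schema is `|X(a)|`. -/
def Schema.arity (a : Schema P V O) : ℕ := a.vars.card

/-- `x/o` is a vertex-consistent substitution: the single-vertex analogue of the
edge removal criteria. -/
def consistentVertex [DecidableEq V] (a : Schema P V O) (s : Set (Atom P V O))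
    (v : V × O) : Prop :=
  v.1 ∈ a.vars ∧
  (∀ p ∈ a.prePos, ∃ q ∈ s, (p.subst (singleSub v)).Matches q) ∧
  (∀ p ∈ a.preNeg, p.subst (singleSub v) ∉ s)

/-- `{v, v'}` is an edge of the substitution consistency graph `G_{a,s}`:
the pair is excluded neither by `I^≠` (two objects for one variable), nor by `I^+`
(some positive precondition atom, after applying `[v,v']`, matches no ground atom
of `s`), nor by `I^-` (some negative precondition atom, after applying `[v,v']`,
yields a ground atom contained in `s`). -/
def consistentEdge [DecidableEq V] (a : Schema P V O) (s : Set (Atom P V O))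
    (v v' : V × O) : Prop :=
  v.1 ∈ a.vars ∧ v'.1 ∈ a.vars ∧
  (v.1 = v'.1 → v.2 = v'.2) ∧
  (∀ p ∈ a.prePos, ∃ q ∈ s, (p.subst (pairSub v v')).Matches q) ∧
  (∀ p ∈ a.preNeg, p.subst (pairSub v v') ∉ s)

/-- The vertex set `{x/ρ(x) | x ∈ X(a)}` (exactly one vertex per variable of `a`)
is a `k`-clique of the substitution consistency graph `G_{a,s}`. -/
def IsCliqueOf [DecidableEq V] (a : Schema P V O) (s : Set (Atom P V O))
    (ρ : V → O) : Prop :=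
  ∀ x ∈ a.vars, ∀ x' ∈ a.vars, x ≠ x' → consistentEdge a s (x, ρ x) (x', ρ x')

/-- All ground precondition (resp. body) literals obtained by applying `ρ` hold in `s`:
positive ground atoms are in `s`, negative ground atoms are not in `s`. -/
def Applicable (a : Schema P V O) (s : Set (Atom P V O)) (ρ : V → O) : Prop :=
  (∀ p ∈ a.prePos, p.ground ρ ∈ s) ∧ (∀ p ∈ a.preNeg, p.ground ρ ∉ s)

/-- A Datalog rule: a head atom and a body (a set of positive and negative literals
over the rule's variables). -/
structure Rule (P V O : Type) : Type where
  head : Atom P V O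
  body : Schema P V O

end Planning


/-!
Every body literal of `r` grounded by `ρ` holds in `J_i^t`. Applying the partial substitution
`[x/ρ(x), x'/ρ(x')]` to a positive literal yields an atom that still matches its `ρ`-grounding,
and since facts are ground, a negative literal can only produce a fact once it is fully
grounded, i.e. equal to its `ρ`-grounding, which is absent. So every pair of vertices of
`C(r̄)` is an edge of `G(r, J_i^t)`. The Δ-fact `p[ρ]` has at most two variables, so they fit
into a pair `{x, x'}` of distinct variables of `r`. Under `[x/ρ(x), x'/ρ(x')]` the atom `p`
becomes `p[ρ] ∉ J_i^{t-1}`, and a ground atom matches no ground fact but itself, so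
`{x/ρ(x), x'/ρ(x')}` is not an edge of `G(r, J_i^{t-1})`.
-/

theorem Finset.exists_subset_pair_of_card_le_two {α : Type*} [DecidableEq α] {s t : Finset α}
    (hst : s ⊆ t) (hs : s.card ≤ 2) (ht : 2 ≤ t.card) :
    ∃ x ∈ t, ∃ y ∈ t, x ≠ y ∧ s ⊆ {x, y} := by
  obtain ⟨u, hsu, hut, hu⟩ := Finset.exists_subsuperset_card_eq hst hs ht
  obtain ⟨x, y, hxy, rfl⟩ := Finset.card_eq_two.mp hu
  exact ⟨x, hut (by simp), y, hut (by simp), hxy, hsu⟩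

namespace Planning

variable {P V O : Type}

theorem Term.eq_of_matches {t u : Term V O} (ht : t.isObj) (hu : u.isObj) (h : t.Matches u) :
    t = u := by
  cases t <;> cases u <;> simp_all [Term.isObj, Term.Matches]

theorem Term.list_eq_of_forall₂_matches {l l' : List (Term V O)}
    (h : List.Forall₂ Term.Matches l l') (hl : ∀ t ∈ l, t.isObj) (hl' : ∀ t ∈ l', t.isObj) :
    l = l' := by
  induction h with
  | nil => rfl
  | cons htu _ ih =>
    simp only [List.mem_cons, forall_eq_or_imp] at hl hl'
    rw [Term.eq_of_matches hl.1 hl'.1 htu, ih hl.2 hl'.2]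

theorem Atom.eq_of_matches {a b : Atom P V O} (ha : a.isGround) (hb : b.isGround)
    (h : a.Matches b) : a = b := by
  obtain ⟨hpred, hargs⟩ := h
  cases a
  cases b
  rw [Atom.mk.injEq]
  exact ⟨hpred, Term.list_eq_of_forall₂_matches hargs ha hb⟩

theorem Atom.isGround_ground (ρ : V → O) (p : Atom P V O) : (p.ground ρ).isGround := by
  intro t ht
  obtain ⟨u, _, rfl⟩ := List.mem_map.mp ht
  cases u <;> trivial

section Agreeing

variable {σ : V → Option O} {ρ : V → O}

theorem Term.subst_matches_ground (hσ : ∀ v o, σ v = some o → ρ v = o) (t : Term V O) :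
    (t.subst σ).Matches (t.subst fun v => some (ρ v)) := by
  cases t with
  | var v =>
    cases h : σ v with
    | none => simp [Term.subst, h, Term.Matches]
    | some o => simp [Term.subst, h, Term.Matches, hσ v o h]
  | obj o => simp [Term.subst, Term.Matches]

theorem Atom.subst_matches_ground (hσ : ∀ v o, σ v = some o → ρ v = o) (p : Atom P V O) :
    (p.subst σ).Matches (p.ground ρ) := by
  refine ⟨rfl, ?_⟩
  simp only [Atom.subst, Atom.ground, List.forall₂_map_right_iff, List.forall₂_map_left_iff]
  exact List.forall₂_same.mpr fun t _ => Term.subst_matches_ground hσ t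

theorem Atom.subst_eq_ground [DecidableEq V] (hσ : ∀ v o, σ v = some o → ρ v = o)
    {p : Atom P V O} (hdom : ∀ v ∈ p.vars, (σ v).isSome) :
    p.subst σ = p.ground ρ := by
  simp only [Atom.subst, Atom.ground, Atom.mk.injEq, true_and]
  refine List.map_congr_left fun t ht => ?_
  cases t with
  | var v =>
    have hv : v ∈ p.vars := List.mem_toFinset.mpr (List.mem_filterMap.mpr ⟨_, ht, rfl⟩)
    obtain ⟨o, ho⟩ := Option.isSome_iff_exists.mp (hdom v hv)
    simp [Term.subst, ho, hσ v o ho]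
  | obj o => rfl

end Agreeing

variable [DecidableEq V]

theorem pairSub_eq_some {ρ : V → O} {x x' v : V} {o : O}
    (h : pairSub (x, ρ x) (x', ρ x') v = some o) : ρ v = o := by
  unfold pairSub at h
  split_ifs at h with hx hx' <;> cases h
  · rw [hx]
  · rw [hx']

theorem consistentEdge_of_applicable {a : Schema P V O} {s : Set (Atom P V O)} {ρ : V → O}
    (hs : ∀ q ∈ s, q.isGround) (happ : Applicable a s ρ) {x x' : V} (hx : x ∈ a.vars)
    (hx' : x' ∈ a.vars) (hne : x ≠ x') :
    consistentEdge a s (x, ρ x) (x', ρ x') := by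
  have hmatch (p : Atom P V O) : (p.subst (pairSub (x, ρ x) (x', ρ x'))).Matches (p.ground ρ) :=
    Atom.subst_matches_ground (fun _ _ => pairSub_eq_some) p
  refine ⟨hx, hx', fun h => absurd h hne, fun p hp => ⟨_, happ.1 p hp, hmatch p⟩, ?_⟩
  intro p hp hmem
  rw [Atom.eq_of_matches (hs _ hmem) (Atom.isGround_ground ρ p) (hmatch p)] at hmem
  exact happ.2 p hp hmem

theorem isCliqueOf_of_applicable {a : Schema P V O} {s : Set (Atom P V O)} {ρ : V → O}
    (hs : ∀ q ∈ s, q.isGround) (happ : Applicable a s ρ) : IsCliqueOf a s ρ :=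
  fun _ hx _ hx' hne => consistentEdge_of_applicable hs happ hx hx' hne

theorem not_consistentEdge_of_ground_notMem {a : Schema P V O} {s : Set (Atom P V O)}
    {ρ : V → O} (hs : ∀ q ∈ s, q.isGround) {p : Atom P V O} (hp : p ∈ a.prePos)
    (hps : p.ground ρ ∉ s) {x x' : V} (hpx : p.vars ⊆ {x, x'}) :
    ¬ consistentEdge a s (x, ρ x) (x', ρ x') := by
  rintro ⟨-, -, -, hpos, -⟩
  obtain ⟨q, hq, hmatch⟩ := hpos p hp
  have hdom (v : V) (hv : v ∈ p.vars) : (pairSub (x, ρ x) (x', ρ x') v).isSome := by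
    rcases Finset.mem_insert.mp (hpx hv) with rfl | hv
    · simp [pairSub]
    · unfold pairSub; split_ifs <;> simp_all
  rw [Atom.subst_eq_ground (fun _ _ => pairSub_eq_some) hdom] at hmatch
  exact hps (Atom.eq_of_matches (Atom.isGround_ground ρ p) (hs q hq) hmatch ▸ hq)

end Planning

open Planning in
/-- Completeness of Δ-edge anchored clique enumeration.
Let `Jold = J_i^{t-1} ⊆ Jnew = J_i^t` be the fact sets of two consecutive
semi-naive iterations (so `Δ_i^t = Jnew \ Jold`), and let `r` be a rule of arity
at least `2` all of whose body literals have arity at most `2`. For every ground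
rule `r̄ ∈ gr({r}, J_i^t)` (induced by `ρ`) with `B(r̄) ∩ Δ_i^t ≠ ∅`, the
corresponding `k`-clique `C(r̄) = {x/ρ(x) | x ∈ X(r)}` is a clique of
`G(r, J_i^t)` containing at least one edge of `ΔE_{i,r}^t`; consequently an
enumeration procedure that, for each Δ-edge, enumerates all `k`-cliques of
`G(r, J_i^t)` containing it, generates the clique `C(r̄)` (seeded at that edge). -/
theorem completeness_of_delta_edge_anchored_enumeration
    {P V O : Type} [DecidableEq V]
    (r : Rule P V O) (Jold Jnew : Set (Atom P V O))
    (hsub : Jold ⊆ Jnew)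
    (hground : ∀ q ∈ Jnew, q.isGround)
    (hbodyvars : ∀ p ∈ r.body.prePos ∪ r.body.preNeg, p.vars ⊆ r.body.vars)
    (hk : 2 ≤ r.body.arity)
    (harity : ∀ p ∈ r.body.prePos ∪ r.body.preNeg, p.vars.card ≤ 2)
    (ρ : V → O)
    (happ : Applicable r.body Jnew ρ)
    (hdelta : ∃ p ∈ r.body.prePos, p.ground ρ ∈ Jnew \ Jold) :
    IsCliqueOf r.body Jnew ρ ∧
    ∃ x ∈ r.body.vars, ∃ x' ∈ r.body.vars, x ≠ x' ∧
      consistentEdge r.body Jnew (x, ρ x) (x', ρ x') ∧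
      ¬ consistentEdge r.body Jold (x, ρ x) (x', ρ x') := by
  refine ⟨isCliqueOf_of_applicable hground happ, ?_⟩
  obtain ⟨p, hp, hpnew, hpold⟩ := hdelta
  obtain ⟨x, hx, x', hx', hne, hpx⟩ := Finset.exists_subset_pair_of_card_le_two
    (hbodyvars p (Or.inl hp)) (harity p (Or.inl hp)) hk
  exact ⟨x, hx, x', hx', hne, consistentEdge_of_applicable hground happ hx hx' hne,
    not_consistentEdge_of_ground_notMem (fun q hq => hground q (hsub hq)) hp hpold hpx⟩
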